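/- arXiv:1710.01898 — 2 statements merged into one kernel-verified Lean document; each statement's English description precedes it below -/
import Mathlib

section
/- Let ξ₁, …, ξₙ be i.i.d. centered real random variables with E(ξ₁⁸) < ∞, and set Rₙ = ((1/n)∑ᵢ₌₁ⁿ ξᵢ)². Then E((Rₙ − Rₙ₋₁)²) = O(n⁻³) as n → ∞. -/
open MeasureTheory ProbabilityTheory Finset Filter Asymptotics

/-!
Write `Sₘ = ξ₀ + ⋯ + ξₘ₋₁`. Then
`Rₘ₊₁ - Rₘ = (m² (2 Sₘ ξₘ + ξₘ²) - (2m + 1) Sₘ²) / (m² (m + 1)²)`,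
so `(Rₘ₊₁ - Rₘ)²` is at most a combination of `Sₘ² ξₘ²`, `ξₘ⁴` and `Sₘ⁴` with coefficients of
order `m⁴`, `m⁴`, `m²`, divided by `m⁴ (m + 1)⁴`. Expanding `E (Sₘ + ξₘ)ᵏ` binomially, independence
and centering kill the odd terms, which gives `E Sₘ² = m σ²` and `E Sₘ⁴ = m μ₄ + 3 m (m - 1) σ⁴`.
Hence the expectation is `O(m⁵ / m⁸)`.
-/

section Moments

variable {Ω : Type*} [MeasurableSpace Ω] {μ : Measure Ω}

lemma MeasureTheory.MemLp.integrable_pow_of_le [IsFiniteMeasure μ] {f : Ω → ℝ} {n k : ℕ}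
    (hf : MemLp f n μ) (hk : k ≤ n) : Integrable (fun ω => f ω ^ k) μ :=
  (hf.mono_exponent (by exact_mod_cast hk)).integrable_norm_pow'.mono'
    (hf.aestronglyMeasurable.pow k) (ae_of_all _ fun ω => (norm_pow (f ω) k).le)

namespace ProbabilityTheory.IndepFun

variable {X Y : Ω → ℝ}

lemma integral_add_pow [IsFiniteMeasure μ] {n : ℕ} (hXY : IndepFun X Y μ) (hX : MemLp X n μ)
    (hY : MemLp Y n μ) :
    ∫ ω, (X ω + Y ω) ^ n ∂μ =
      ∑ k ∈ range (n + 1), (∫ ω, X ω ^ k ∂μ) * (∫ ω, Y ω ^ (n - k) ∂μ) * n.choose k := by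
  have hpow (k : ℕ) : IndepFun (fun ω => X ω ^ k) (fun ω => Y ω ^ (n - k)) μ :=
    hXY.comp (φ := fun x => x ^ k) (ψ := fun x => x ^ (n - k)) (by fun_prop) (by fun_prop)
  simp_rw [add_pow]
  rw [integral_finsetSum]
  · refine sum_congr rfl fun k _ => ?_
    rw [integral_mul_const, (hpow k).integral_fun_mul_eq_mul_integral
      (hX.aestronglyMeasurable.pow k) (hY.aestronglyMeasurable.pow _)]
  · intro k hk
    exact ((hpow k).integrable_mul (hX.integrable_pow_of_le (mem_range_succ_iff.1 hk))
      (hY.integrable_pow_of_le (n.sub_le k))).mul_const _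

variable [IsProbabilityMeasure μ]

lemma integral_add_sq (hXY : IndepFun X Y μ) (hX : MemLp X 2 μ) (hY : MemLp Y 2 μ)
    (hY0 : ∫ ω, Y ω ∂μ = 0) :
    ∫ ω, (X ω + Y ω) ^ 2 ∂μ = ∫ ω, X ω ^ 2 ∂μ + ∫ ω, Y ω ^ 2 ∂μ := by
  rw [hXY.integral_add_pow hX hY]
  simp [sum_range_succ, hY0, add_comm]

lemma integral_add_pow_four (hXY : IndepFun X Y μ) (hX : MemLp X 4 μ) (hY : MemLp Y 4 μ)
    (hX0 : ∫ ω, X ω ∂μ = 0) (hY0 : ∫ ω, Y ω ∂μ = 0) :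
    ∫ ω, (X ω + Y ω) ^ 4 ∂μ =
      ∫ ω, X ω ^ 4 ∂μ + 6 * (∫ ω, X ω ^ 2 ∂μ) * (∫ ω, Y ω ^ 2 ∂μ) + ∫ ω, Y ω ^ 4 ∂μ := by
  rw [hXY.integral_add_pow hX hY]
  simp only [sum_range_succ, range_one, sum_singleton, Nat.choose, Nat.reduceAdd, Nat.reduceSub,
    Nat.add_one_sub_one, tsub_zero, tsub_self, pow_zero, pow_one, integral_const, probReal_univ,
    smul_eq_mul, hX0, hY0, Nat.cast_one, Nat.cast_ofNat, zero_mul, mul_zero, mul_one, one_mul,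
    add_zero]
  ring

end ProbabilityTheory.IndepFun

end Moments

lemma sq_div_sub_sq_div_sq_le {M : ℝ} (hM : 1 ≤ M) (x y : ℝ) :
    (((x + y) / (M + 1)) ^ 2 - (x / M) ^ 2) ^ 2 ≤
      3 * (4 * M ^ 4 * (x ^ 2 * y ^ 2) + M ^ 4 * y ^ 4 + 9 * M ^ 2 * x ^ 4) /
        (M ^ 4 * (M + 1) ^ 4) := by
  have hM0 : 0 < M := by linarith
  have hdiff : ((x + y) / (M + 1)) ^ 2 - (x / M) ^ 2 =
      (M ^ 2 * (2 * x * y + y ^ 2) - (2 * M + 1) * x ^ 2) / (M ^ 2 * (M + 1) ^ 2) := by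
    field_simp
    ring
  rw [hdiff, div_pow, mul_pow, ← pow_mul, ← pow_mul]
  gcongr
  have h9 : (2 * M + 1) ^ 2 ≤ 9 * M ^ 2 := by nlinarith
  nlinarith [sq_nonneg (2 * M ^ 2 * x * y - M ^ 2 * y ^ 2),
    sq_nonneg (2 * M ^ 2 * x * y + (2 * M + 1) * x ^ 2),
    sq_nonneg (M ^ 2 * y ^ 2 + (2 * M + 1) * x ^ 2),
    mul_le_mul_of_nonneg_right h9 (by positivity : 0 ≤ x ^ 4)]

lemma fourth_moment_bound_le {M σ2 m4 : ℝ} (hM : 1 ≤ M) (hm4 : 0 ≤ m4) :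
    3 * (4 * M ^ 4 * (M * σ2 * σ2) + M ^ 4 * m4
      + 9 * M ^ 2 * (M * m4 + 3 * M * (M - 1) * σ2 ^ 2)) / (M ^ 4 * (M + 1) ^ 4)
      ≤ (93 * σ2 ^ 2 + 30 * m4) / (M + 1) ^ 3 := by
  have hM0 : 0 ≤ M := by linarith
  have hnum : 3 * (4 * M ^ 4 * (M * σ2 * σ2) + M ^ 4 * m4
      + 9 * M ^ 2 * (M * m4 + 3 * M * (M - 1) * σ2 ^ 2))
      ≤ (93 * σ2 ^ 2 + 30 * m4) * (M ^ 4 * (M + 1)) := by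
    have hM34 : M ^ 3 ≤ M ^ 4 := pow_le_pow_right₀ hM (by norm_num)
    nlinarith [mul_le_mul_of_nonneg_left hM34 hm4, mul_nonneg (pow_nonneg hM0 5) hm4,
      mul_nonneg (pow_nonneg hM0 3) (sq_nonneg σ2), mul_nonneg (pow_nonneg hM0 4) (sq_nonneg σ2),
      mul_nonneg (pow_nonneg hM0 5) (sq_nonneg σ2)]
  rw [div_le_div_iff₀ (by positivity) (by positivity)]
  calc _ ≤ (93 * σ2 ^ 2 + 30 * m4) * (M ^ 4 * (M + 1)) * (M + 1) ^ 3 := by gcongr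
    _ = _ := by ring

section PartialSums

variable {Ω : Type*} [MeasurableSpace Ω] {μ : Measure Ω} {ξ : ℕ → Ω → ℝ} {σ2 m4 : ℝ}

lemma ProbabilityTheory.iIndepFun.indepFun_sum_range_succ' (hindep : iIndepFun ξ μ)
    (hmeas : ∀ i, Measurable (ξ i)) (n : ℕ) :
    IndepFun (fun ω => ∑ i ∈ range n, ξ i ω) (ξ n) μ := by
  simpa only [← Finset.sum_fn] using hindep.indepFun_sum_range_succ hmeas n

lemma integral_sum_range_eq_zero (hint : ∀ i, Integrable (ξ i) μ)
    (hcent : ∀ i, ∫ ω, ξ i ω ∂μ = 0) (n : ℕ) : ∫ ω, ∑ i ∈ range n, ξ i ω ∂μ = 0 := by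
  rw [integral_finsetSum _ fun i _ => hint i]
  simp [hcent]

variable [IsProbabilityMeasure μ]

lemma integral_sum_range_sq (hindep : iIndepFun ξ μ) (hmeas : ∀ i, Measurable (ξ i))
    (hmem : ∀ i, MemLp (ξ i) 2 μ) (hcent : ∀ i, ∫ ω, ξ i ω ∂μ = 0)
    (hσ2 : ∀ i, ∫ ω, ξ i ω ^ 2 ∂μ = σ2) (n : ℕ) :
    ∫ ω, (∑ i ∈ range n, ξ i ω) ^ 2 ∂μ = n * σ2 := by
  induction n with
  | zero => simp
  | succ n ih =>
    simp_rw [sum_range_succ]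
    rw [(hindep.indepFun_sum_range_succ' hmeas n).integral_add_sq
      (memLp_finsetSum _ fun i _ => hmem i) (hmem n) (hcent n), ih, hσ2]
    push_cast
    ring

lemma integral_sum_range_pow_four (hindep : iIndepFun ξ μ) (hmeas : ∀ i, Measurable (ξ i))
    (hmem : ∀ i, MemLp (ξ i) 4 μ) (hcent : ∀ i, ∫ ω, ξ i ω ∂μ = 0)
    (hσ2 : ∀ i, ∫ ω, ξ i ω ^ 2 ∂μ = σ2) (hm4 : ∀ i, ∫ ω, ξ i ω ^ 4 ∂μ = m4) (n : ℕ) :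
    ∫ ω, (∑ i ∈ range n, ξ i ω) ^ 4 ∂μ = n * m4 + 3 * n * (n - 1) * σ2 ^ 2 := by
  induction n with
  | zero => simp
  | succ n ih =>
    simp_rw [sum_range_succ]
    rw [(hindep.indepFun_sum_range_succ' hmeas n).integral_add_pow_four
      (memLp_finsetSum _ fun i _ => hmem i) (hmem n)
      (integral_sum_range_eq_zero (fun i => (hmem i).integrable (by norm_num)) hcent n) (hcent n),
      ih, integral_sum_range_sq hindep hmeas (fun i => (hmem i).mono_exponent (by norm_num))
      hcent hσ2, hσ2, hm4]
    push_cast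
    ring

lemma integral_sq_sampleMean_sub_le (hindep : iIndepFun ξ μ) (hmeas : ∀ i, Measurable (ξ i))
    (hmem : ∀ i, MemLp (ξ i) 4 μ) (hcent : ∀ i, ∫ ω, ξ i ω ∂μ = 0)
    (hσ2 : ∀ i, ∫ ω, ξ i ω ^ 2 ∂μ = σ2) (hm4 : ∀ i, ∫ ω, ξ i ω ^ 4 ∂μ = m4)
    {m : ℕ} (hm : 1 ≤ m) :
    ∫ ω, (((∑ i ∈ range (m + 1), ξ i ω) / (m + 1)) ^ 2 - ((∑ i ∈ range m, ξ i ω) / m) ^ 2) ^ 2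
      ∂μ ≤ (93 * σ2 ^ 2 + 30 * m4) / (m + 1) ^ 3 := by
  set S : Ω → ℝ := fun ω => ∑ i ∈ range m, ξ i ω
  have hM : (1 : ℝ) ≤ m := by exact_mod_cast hm
  have hm4_nonneg : 0 ≤ m4 := hm4 0 ▸ integral_nonneg fun ω => by positivity
  have hSmem : MemLp S 4 μ := memLp_finsetSum _ fun i _ => hmem i
  have hSξ : IndepFun (fun ω => S ω ^ 2) (fun ω => ξ m ω ^ 2) μ :=
    (hindep.indepFun_sum_range_succ' hmeas m).comp
      (φ := fun x => x ^ 2) (ψ := fun x => x ^ 2) (by fun_prop) (by fun_prop)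
  have hSξ_int : Integrable (fun ω => S ω ^ 2 * ξ m ω ^ 2) μ :=
    hSξ.integrable_mul (hSmem.integrable_pow_of_le (by norm_num))
      ((hmem m).integrable_pow_of_le (by norm_num))
  have hSξ_val : ∫ ω, S ω ^ 2 * ξ m ω ^ 2 ∂μ = m * σ2 * σ2 := by
    rw [hSξ.integral_fun_mul_eq_mul_integral (hSmem.aestronglyMeasurable.pow 2)
      ((hmem m).aestronglyMeasurable.pow 2), integral_sum_range_sq hindep hmeas
      (fun i => (hmem i).mono_exponent (by norm_num)) hcent hσ2, hσ2]
  have hξ4 : Integrable (fun ω => ξ m ω ^ 4) μ := (hmem m).integrable_pow_of_le le_rfl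
  have hS4 : Integrable (fun ω => S ω ^ 4) μ := hSmem.integrable_pow_of_le le_rfl
  have hSξ_ξ4 : Integrable
      (fun ω => 4 * (m : ℝ) ^ 4 * (S ω ^ 2 * ξ m ω ^ 2) + m ^ 4 * ξ m ω ^ 4) μ :=
    (hSξ_int.const_mul _).add (hξ4.const_mul _)
  simp_rw [sum_range_succ]
  calc _ ≤ ∫ ω, 3 * (4 * (m : ℝ) ^ 4 * (S ω ^ 2 * ξ m ω ^ 2) + m ^ 4 * ξ m ω ^ 4
          + 9 * m ^ 2 * S ω ^ 4) / (m ^ 4 * (m + 1) ^ 4) ∂μ := by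
        refine integral_mono_of_nonneg (ae_of_all _ fun ω => sq_nonneg _) ?_
          (ae_of_all _ fun ω => sq_div_sub_sq_div_sq_le hM _ _)
        exact ((hSξ_ξ4.add (hS4.const_mul _)).const_mul _).div_const _
    _ = 3 * (4 * m ^ 4 * (m * σ2 * σ2) + m ^ 4 * m4
          + 9 * m ^ 2 * (m * m4 + 3 * m * (m - 1) * σ2 ^ 2)) / (m ^ 4 * (m + 1) ^ 4) := by
        rw [integral_div, integral_const_mul, integral_add hSξ_ξ4 (hS4.const_mul _),
          integral_add (hSξ_int.const_mul _) (hξ4.const_mul _), integral_const_mul,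
          integral_const_mul, integral_const_mul, hSξ_val, hm4, integral_sum_range_pow_four hindep hmeas hmem hcent hσ2 hm4]
    _ ≤ (93 * σ2 ^ 2 + 30 * m4) / (m + 1) ^ 3 := fourth_moment_bound_le hM hm4_nonneg

end PartialSums

/-- for i.i.d. centered ξ with finite eighth moment,
`E((Rₙ − Rₙ₋₁)²) = O(n⁻³)` where `Rₙ` is the squared sample mean. -/
theorem stmt_2 {Ω : Type*} [MeasureSpace Ω] [IsProbabilityMeasure (ℙ : Measure Ω)]
    (ξ : ℕ → Ω → ℝ)
    (hmeas : ∀ i, Measurable (ξ i))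
    (hindep : iIndepFun ξ ℙ)
    (hident : ∀ i, Measure.map (ξ i) ℙ = Measure.map (ξ 0) ℙ)
    (hcent : ∫ ω, ξ 0 ω ∂ℙ = 0)
    (hmom : Integrable (fun ω => (ξ 0 ω) ^ 8) ℙ)
    (R : ℕ → Ω → ℝ)
    (hR : ∀ n ω, R n ω = (((1 : ℝ) / n) * ∑ i ∈ range n, ξ i ω) ^ 2) :
    (fun n : ℕ => ∫ ω, (R n ω - R (n - 1) ω) ^ 2 ∂ℙ)
      =O[atTop] fun n : ℕ => ((n : ℝ) ^ 3)⁻¹ := by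
  have hid i : IdentDistrib (ξ i) (ξ 0) ℙ ℙ :=
    ⟨(hmeas i).aemeasurable, (hmeas 0).aemeasurable, hident i⟩
  have hmoment i k : ∫ ω, ξ i ω ^ k ∂ℙ = ∫ ω, ξ 0 ω ^ k ∂ℙ :=
    ((hid i).comp (measurable_id.pow_const k)).integral_eq
  have h8 : MemLp (ξ 0) 8 ℙ :=
    (integrable_norm_rpow_iff (hmeas 0).aestronglyMeasurable (by norm_num) (by norm_num)).1
      (by simpa [norm_pow] using hmom.norm)
  have hmem i : MemLp (ξ i) 4 ℙ := (hid i).memLp_iff.2 (h8.mono_exponent (by norm_num))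
  have hcent' i : ∫ ω, ξ i ω ∂ℙ = 0 := by simpa [hcent] using hmoment i 1
  refine IsBigO.of_bound (93 * (∫ ω, ξ 0 ω ^ 2 ∂ℙ) ^ 2 + 30 * ∫ ω, ξ 0 ω ^ 4 ∂ℙ) ?_
  filter_upwards [eventually_ge_atTop 2] with n hn
  obtain ⟨m, rfl⟩ : ∃ m, n = m + 1 := ⟨n - 1, by omega⟩
  have hbound := integral_sq_sampleMean_sub_le hindep hmeas hmem hcent' (hmoment · 2)
    (hmoment · 4) (by omega : 1 ≤ m)
  simp only [hR, one_div_mul_eq_div, Nat.add_sub_cancel, Nat.cast_succ]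
  rw [Real.norm_of_nonneg (integral_nonneg fun ω => sq_nonneg _),
    Real.norm_of_nonneg (by positivity), ← div_eq_mul_inv]
  exact hbound
end

section
/- For equal sample sizes N = n₁ = n₂ and pairs Zⱼ = (X_{1j}, X_{2j}), if T_N = (1/N)∑ⱼ h(Zⱼ) + R_N with h(z) = (h₁(z₁) + h₂(z₂))/2, E(h(Z₁)) = 0, E(h(Z₁)⁴) < ∞, and N·E(R_N²) = o(1), N²·E((R_N − R_{N−1})²) = o(1), then the leave-one-pair-out jackknife estimator σ̂_N²(T) = (N−1)∑ᵢ(T_{N,−i} − T̄_{N,−•})² converges in probability, and in expectation, to σ²(T) = Var(h(Z₁)), as N → ∞. -/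
/-!
Each leave-one-out value is the leave-one-out mean of the `h(Zⱼ)` plus a remainder. The jackknife
`J(t) = (N - 1) ∑ (tᵢ - t̄)²` is a quadratic form in `t`; on the leave-one-out means it is exactly
the unbiased sample variance `A_N` of the `h(Zⱼ)`, which has mean `σ²` and tends to `σ²` almost
surely by the strong law. Cauchy–Schwarz and AM–GM bound the cross term of the quadratic form, so
`|σ̂_N² - A_N| ≤ s A_N + (1 + 1/s) B_N` for every `s > 0`, where `B_N` is the jackknife of the
remainders. As every `Rm_{N,i} - R_N` has the law of `R_{N-1} - R_N`, `E B_N ≤ N² E(R_N - R_{N-1})²`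
tends to `0`. Hence `E|σ̂_N² - A_N| → 0`, which gives convergence both in mean and in probability.
-/

open MeasureTheory ProbabilityTheory Finset Filter Topology

noncomputable section

def sampleVariance (y : ℕ → ℝ) (N : ℕ) : ℝ :=
  (∑ i ∈ range N, (y i - (1 : ℝ) / N * ∑ j ∈ range N, y j) ^ 2) / ((N : ℝ) - 1)

def jackknifeVariance (t : ℕ → ℝ) (N : ℕ) : ℝ :=
  ((N : ℝ) - 1) * ∑ i ∈ range N, (t i - (1 : ℝ) / N * ∑ k ∈ range N, t k) ^ 2

end

lemma sum_sq_sub_mean (y : ℕ → ℝ) (N : ℕ) :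
    ∑ i ∈ range N, (y i - (1 : ℝ) / N * ∑ j ∈ range N, y j) ^ 2
      = ∑ i ∈ range N, y i ^ 2 - (∑ j ∈ range N, y j) ^ 2 / N := by
  rcases N.eq_zero_or_pos with rfl | hN
  · simp
  simp only [sub_sq, sum_add_distrib, sum_sub_distrib, ← sum_mul, ← mul_sum, sum_const,
    card_range, nsmul_eq_mul]
  field_simp
  ring

lemma sampleVariance_eq (y : ℕ → ℝ) (N : ℕ) :
    sampleVariance y N
      = (∑ i ∈ range N, y i ^ 2 - (∑ i ∈ range N, y i) ^ 2 / N) / ((N : ℝ) - 1) := by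
  rw [sampleVariance, sum_sq_sub_mean]

lemma sum_sq_sub_mean_le (y : ℕ → ℝ) (N : ℕ) (c : ℝ) :
    ∑ i ∈ range N, (y i - (1 : ℝ) / N * ∑ j ∈ range N, y j) ^ 2
      ≤ ∑ i ∈ range N, (y i - c) ^ 2 := by
  rcases N.eq_zero_or_pos with rfl | hN
  · simp
  have hshift : ∀ i, y i - (1 : ℝ) / N * ∑ j ∈ range N, y j
      = (y i - c) - (1 : ℝ) / N * ∑ j ∈ range N, (y j - c) := by
    intro i
    rw [sum_sub_distrib, sum_const, card_range, nsmul_eq_mul]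
    field_simp
    ring
  simp only [hshift, sum_sq_sub_mean (fun i => y i - c)]
  have : 0 ≤ (∑ j ∈ range N, (y j - c)) ^ 2 / N := by positivity
  linarith

lemma two_mul_abs_le_of_sq_le_mul {c p q s : ℝ} (hs : 0 < s) (hp : 0 ≤ p) (hq : 0 ≤ q)
    (h : c ^ 2 ≤ p * q) : 2 * |c| ≤ s * p + q / s := by
  have hpq : (s * p) * (q / s) = p * q := by field_simp
  refine abs_le_of_sq_le_sq' ?_ (by positivity) |>.2
  nlinarith [sq_nonneg (s * p - q / s), sq_abs c]

lemma jackknifeVariance_nonneg (t : ℕ → ℝ) (N : ℕ) : 0 ≤ jackknifeVariance t N := by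
  rcases N with _ | N
  · simp [jackknifeVariance]
  exact mul_nonneg (by simp) (sum_nonneg fun i _ => sq_nonneg _)

lemma jackknifeVariance_congr {t t' : ℕ → ℝ} {N : ℕ} (h : ∀ i < N, t i = t' i) :
    jackknifeVariance t N = jackknifeVariance t' N := by
  have h' : ∀ i ∈ range N, t i = t' i := fun i hi => h i (mem_range.1 hi)
  simp only [jackknifeVariance, sum_congr rfl h']
  congr 1
  exact sum_congr rfl fun i hi => by rw [h' i hi]

lemma jackknifeVariance_le (r : ℕ → ℝ) (N : ℕ) (c : ℝ) :
    jackknifeVariance r N ≤ ((N : ℝ) - 1) * ∑ i ∈ range N, (r i - c) ^ 2 := by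
  rcases N with _ | N
  · simp [jackknifeVariance]
  exact mul_le_mul_of_nonneg_left (sum_sq_sub_mean_le r _ c) (by simp)

lemma jackknifeVariance_leaveOneOutMean (y : ℕ → ℝ) (N : ℕ) :
    jackknifeVariance (fun i => (1 : ℝ) / (N - 1) * ∑ j ∈ (range N).erase i, y j) N
      = sampleVariance y N := by
  by_cases hN : 2 ≤ N
  swap
  · interval_cases N <;> simp [jackknifeVariance, sampleVariance]
  have hN1 : (N : ℝ) - 1 ≠ 0 := by
    have : (2 : ℝ) ≤ N := by exact_mod_cast hN
    linarith
  rw [jackknifeVariance_congr (t' := fun i => (∑ j ∈ range N, y j - y i) / (N - 1))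
    fun i hi => by rw [sum_erase_eq_sub (mem_range.2 hi)]; ring]
  unfold jackknifeVariance sampleVariance
  set S := ∑ j ∈ range N, y j
  have hmean : ∑ k ∈ range N, (S - y k) / ((N : ℝ) - 1) = S := by
    rw [← sum_div, sum_sub_distrib, sum_const, card_range, nsmul_eq_mul]
    field_simp
    ring
  have hdev : ∀ i, ((S - y i) / (N - 1) - (1 : ℝ) / N * S) ^ 2
      = (y i - (1 : ℝ) / N * S) ^ 2 / ((N : ℝ) - 1) ^ 2 := by
    intro i
    field_simp
    ring
  rw [hmean, sum_congr rfl fun i _ => hdev i, ← sum_div]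
  field_simp

lemma abs_jackknifeVariance_add_sub_le (a b : ℕ → ℝ) (N : ℕ) {s : ℝ} (hs : 0 < s) :
    |jackknifeVariance (a + b) N - jackknifeVariance a N|
      ≤ s * jackknifeVariance a N + (1 + 1 / s) * jackknifeVariance b N := by
  set da := fun i => a i - (1 : ℝ) / N * ∑ k ∈ range N, a k
  set db := fun i => b i - (1 : ℝ) / N * ∑ k ∈ range N, b k
  set C := ((N : ℝ) - 1) * ∑ i ∈ range N, da i * db i
  have hJa : jackknifeVariance a N = ((N : ℝ) - 1) * ∑ i ∈ range N, da i ^ 2 := rfl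
  have hJb : jackknifeVariance b N = ((N : ℝ) - 1) * ∑ i ∈ range N, db i ^ 2 := rfl
  have hdev : ∀ i, (a + b) i - (1 : ℝ) / N * ∑ k ∈ range N, (a + b) k = da i + db i := by
    intro i
    simp only [Pi.add_apply, sum_add_distrib, da, db]
    ring
  have hsq : ∑ i ∈ range N, (da i + db i) ^ 2
      = ∑ i ∈ range N, da i ^ 2 + 2 * ∑ i ∈ range N, da i * db i + ∑ i ∈ range N, db i ^ 2 := by
    rw [mul_sum, ← sum_add_distrib, ← sum_add_distrib]
    exact sum_congr rfl fun i _ => by ring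
  have hexpand : jackknifeVariance (a + b) N - jackknifeVariance a N
      = 2 * C + jackknifeVariance b N := by
    simp only [jackknifeVariance, hdev, hsq, C]
    ring
  have hCS : C ^ 2 ≤ jackknifeVariance a N * jackknifeVariance b N := by
    rw [hJa, hJb, mul_pow, mul_mul_mul_comm, ← sq]
    exact mul_le_mul_of_nonneg_left (sum_mul_sq_le_sq_mul_sq _ _ _) (sq_nonneg _)
  have h2C := two_mul_abs_le_of_sq_le_mul hs (jackknifeVariance_nonneg a N)
    (jackknifeVariance_nonneg b N) hCS
  have hB := jackknifeVariance_nonneg b N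
  have hsplit : (1 + 1 / s) * jackknifeVariance b N
      = jackknifeVariance b N + jackknifeVariance b N / s := by ring
  rw [hexpand]
  calc |2 * C + jackknifeVariance b N| ≤ |2 * C| + |jackknifeVariance b N| := abs_add_le _ _
    _ = 2 * |C| + jackknifeVariance b N := by rw [abs_mul, abs_two, abs_of_nonneg hB]
    _ ≤ _ := by linarith

lemma tendsto_zero_of_forall_pos_le {g b : ℕ → ℝ} {c : ℝ} (hg : ∀ N, 0 ≤ g N)
    (hb0 : ∀ N, 0 ≤ b N) (hb : Tendsto b atTop (𝓝 0))
    (hle : ∀ᶠ N in atTop, ∀ s > 0, g N ≤ s * c + (1 + 1 / s) * b N) :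
    Tendsto g atTop (𝓝 0) := by
  -- `s = √b` balances the two terms; the extra `1 / (N + 1)` keeps `s` positive
  set s : ℕ → ℝ := fun N => √(b N) + 1 / ((N : ℝ) + 1)
  have hs_pos : ∀ N, 0 < s N := fun N => by positivity
  have hsqrt : Tendsto (fun N => √(b N)) atTop (𝓝 0) := by
    simpa using hb.sqrt
  have hs : Tendsto s atTop (𝓝 0) := by
    simpa [s] using hsqrt.add tendsto_one_div_add_atTop_nhds_zero_nat
  have hdiv : ∀ N, b N / s N ≤ √(b N) := fun N => by
    rw [div_le_iff₀ (hs_pos N)]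
    nlinarith [Real.mul_self_sqrt (hb0 N), Real.sqrt_nonneg (b N),
      (by positivity : (0 : ℝ) ≤ 1 / ((N : ℝ) + 1))]
  have hupper : Tendsto (fun N => s N * c + (b N + √(b N))) atTop (𝓝 0) := by
    simpa using (hs.mul_const c).add (hb.add hsqrt)
  refine tendsto_of_tendsto_of_tendsto_of_le_of_le' tendsto_const_nhds hupper
    (Eventually.of_forall hg) ?_
  filter_upwards [hle] with N hN
  calc g N ≤ s N * c + (1 + 1 / s N) * b N := hN _ (hs_pos N)
    _ ≤ s N * c + (b N + √(b N)) := by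
        have hsplit : (1 + 1 / s N) * b N = b N + b N / s N := by ring
        linarith [hdiv N]

section

variable {Ω : Type*} [MeasurableSpace Ω] {μ : Measure Ω}

theorem MeasureTheory.TendstoInMeasure.add {ι E : Type*} [SeminormedAddCommGroup E]
    {l : Filter ι} {f f' : ι → Ω → E} {g g' : Ω → E}
    (hf : TendstoInMeasure μ f l g) (hf' : TendstoInMeasure μ f' l g') :
    TendstoInMeasure μ (f + f') l (g + g') := by
  rw [tendstoInMeasure_iff_dist] at *
  intro ε hε
  have hsplit : ∀ i, μ {x | ε ≤ dist ((f + f') i x) ((g + g') x)}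
      ≤ μ {x | ε / 2 ≤ dist (f i x) (g x)} + μ {x | ε / 2 ≤ dist (f' i x) (g' x)} := by
    refine fun i => (measure_mono fun x hx => ?_).trans (measure_union_le _ _)
    by_contra hx'
    simp only [Set.mem_union, Set.mem_ofPred_eq, not_or, not_le] at hx hx'
    have := dist_add_add_le (f i x) (f' i x) (g x) (g' x)
    simp only [Pi.add_apply] at hx
    linarith
  refine tendsto_of_tendsto_of_tendsto_of_le_of_le tendsto_const_nhds ?_ (fun _ => zero_le)
    hsplit
  simpa using (hf _ (half_pos hε)).add (hf' _ (half_pos hε))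

theorem tendstoInMeasure_zero_of_tendsto_integral_norm {ι E : Type*} [NormedAddCommGroup E]
    {l : Filter ι} {f : ι → Ω → E} (hf : ∀ i, Integrable (f i) μ)
    (h : Tendsto (fun i => ∫ x, ‖f i x‖ ∂μ) l (𝓝 0)) : TendstoInMeasure μ f l 0 := by
  refine tendstoInMeasure_of_tendsto_eLpNorm one_ne_zero (fun i => (hf i).aestronglyMeasurable)
    aestronglyMeasurable_zero ?_
  simp only [sub_zero, eLpNorm_one_eq_lintegral_enorm,
    ← ofReal_integral_norm_eq_lintegral_enorm (hf _)]
  simpa using ENNReal.tendsto_ofReal h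

section

variable {X A B : ℕ → Ω → ℝ} {c : ℝ}

lemma integrable_sub_of_abs_sub_le (hX : ∀ N, AEStronglyMeasurable (X N) μ)
    (hA : ∀ N, Integrable (A N) μ) (hB : ∀ N, Integrable (B N) μ)
    (hle : ∀ N ω, ∀ s > 0, |X N ω - A N ω| ≤ s * A N ω + (1 + 1 / s) * B N ω) (N : ℕ) :
    Integrable (X N - A N) μ :=
  (((hA N).const_mul 1).add ((hB N).const_mul (1 + 1 / 1))).mono'
    ((hX N).sub (hA N).aestronglyMeasurable) (.of_forall fun ω => hle N ω 1 one_pos)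

lemma tendsto_integral_abs_sub_of_abs_sub_le (hA : ∀ N, Integrable (A N) μ)
    (hB : ∀ N, Integrable (B N) μ) (hB0 : ∀ N ω, 0 ≤ B N ω)
    (hXA : ∀ N, Integrable (X N - A N) μ)
    (hle : ∀ N ω, ∀ s > 0, |X N ω - A N ω| ≤ s * A N ω + (1 + 1 / s) * B N ω)
    (hEA : ∀ᶠ N in atTop, ∫ ω, A N ω ∂μ = c) (hEB : Tendsto (fun N => ∫ ω, B N ω ∂μ) atTop (𝓝 0)) :
    Tendsto (fun N => ∫ ω, |X N ω - A N ω| ∂μ) atTop (𝓝 0) := by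
  refine tendsto_zero_of_forall_pos_le (c := c) (fun N => integral_nonneg fun ω => abs_nonneg _)
    (fun N => integral_nonneg (hB0 N)) hEB ?_
  filter_upwards [hEA] with N hN s hs
  calc ∫ ω, |X N ω - A N ω| ∂μ ≤ ∫ ω, s * A N ω + (1 + 1 / s) * B N ω ∂μ :=
        integral_mono (hXA N).abs (((hA N).const_mul s).add ((hB N).const_mul _))
          fun ω => hle N ω s hs
    _ = s * c + (1 + 1 / s) * ∫ ω, B N ω ∂μ := by
        rw [integral_add ((hA N).const_mul s) ((hB N).const_mul _), integral_const_mul,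
          integral_const_mul, hN]

lemma tendstoInMeasure_and_tendsto_integral_of_tendsto_integral_abs_sub [IsFiniteMeasure μ]
    (hA : ∀ N, Integrable (A N) μ) (hAae : ∀ᵐ ω ∂μ, Tendsto (A · ω) atTop (𝓝 c))
    (hEA : ∀ᶠ N in atTop, ∫ ω, A N ω ∂μ = c) (hXA : ∀ N, Integrable (X N - A N) μ)
    (hL1 : Tendsto (fun N => ∫ ω, |X N ω - A N ω| ∂μ) atTop (𝓝 0)) :
    TendstoInMeasure μ X atTop (fun _ => c) ∧ Tendsto (fun N => ∫ ω, X N ω ∂μ) atTop (𝓝 c) := by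
  constructor
  · have hm := (tendstoInMeasure_of_tendsto_ae (fun N => (hA N).aestronglyMeasurable) hAae).add
      (tendstoInMeasure_zero_of_tendsto_integral_norm (f := X - A) hXA hL1)
    rwa [add_sub_cancel, add_zero] at hm
  · have hdiff : Tendsto (fun N => ∫ ω, (X N - A N) ω ∂μ) atTop (𝓝 0) :=
      squeeze_zero_norm (fun N => norm_integral_le_integral_norm _) hL1
    refine (by simpa using hdiff.add_const c : Tendsto _ atTop (𝓝 c)).congr' ?_
    filter_upwards [hEA] with N hN
    have hsplit := integral_add (hXA N) (hA N)
    simp only [Pi.sub_apply, sub_add_cancel] at hsplit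
    rw [hsplit, hN]

end

lemma measurable_jackknifeVariance {t : ℕ → Ω → ℝ} {N : ℕ} (ht : ∀ i < N, Measurable (t i)) :
    Measurable fun ω => jackknifeVariance (t · ω) N := by
  have hsum : Measurable fun ω => ∑ k ∈ range N, t k ω :=
    Finset.measurable_sum _ fun k hk => ht k (mem_range.1 hk)
  exact (Finset.measurable_sum _ fun i hi =>
    ((ht i (mem_range.1 hi)).sub (hsum.const_mul _)).pow_const 2).const_mul _

lemma integral_jackknifeVariance_le {r : ℕ → Ω → ℝ} {c : Ω → ℝ} {N : ℕ} {q : ℝ}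
    (hr : ∀ i < N, Measurable (r i)) (hint : ∀ i < N, Integrable (fun ω => (c ω - r i ω) ^ 2) μ)
    (hq : ∀ i < N, ∫ ω, (c ω - r i ω) ^ 2 ∂μ = q) :
    Integrable (fun ω => jackknifeVariance (r · ω) N) μ ∧
      ∫ ω, jackknifeVariance (r · ω) N ∂μ ≤ ((N : ℝ) - 1) * (N * q) := by
  have hF : Integrable (fun ω => ((N : ℝ) - 1) * ∑ i ∈ range N, (c ω - r i ω) ^ 2) μ :=
    (integrable_finsetSum _ fun i hi => hint i (mem_range.1 hi)).const_mul _
  have hle : ∀ ω, jackknifeVariance (r · ω) N ≤ ((N : ℝ) - 1) * ∑ i ∈ range N, (c ω - r i ω) ^ 2 :=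
    fun ω => (jackknifeVariance_le _ N (c ω)).trans_eq
      (congrArg _ (sum_congr rfl fun i _ => sub_sq_comm _ _))
  have hJ : Integrable (fun ω => jackknifeVariance (r · ω) N) μ :=
    hF.mono' (measurable_jackknifeVariance hr).aestronglyMeasurable <| .of_forall fun ω => by
      rw [Real.norm_of_nonneg (jackknifeVariance_nonneg _ _)]
      exact hle ω
  refine ⟨hJ, (integral_mono hJ hF hle).trans_eq ?_⟩
  rw [integral_const_mul, integral_finsetSum _ fun i hi => hint i (mem_range.1 hi),
    sum_congr rfl fun i hi => hq i (mem_range.1 hi), sum_const, card_range, nsmul_eq_mul]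

lemma tendsto_integral_jackknifeVariance_remainder {R : ℕ → Ω → ℝ} {Rm : ℕ → ℕ → Ω → ℝ}
    (hR : ∀ N, MemLp (R N) 2 μ) (hRm : ∀ N i, i < N → Measurable (Rm N i))
    (hjoint : ∀ N i, i < N →
      μ.map (fun ω => (R N ω, Rm N i ω)) = μ.map (fun ω => (R N ω, R (N - 1) ω)))
    (hR2 : Tendsto (fun N : ℕ => (N : ℝ) ^ 2 * ∫ ω, (R N ω - R (N - 1) ω) ^ 2 ∂μ)
      atTop (𝓝 0)) :
    (∀ N, Integrable (fun ω => jackknifeVariance (Rm N · ω) N) μ) ∧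
      Tendsto (fun N => ∫ ω, jackknifeVariance (Rm N · ω) N ∂μ) atTop (𝓝 0) := by
  set q : ℕ → ℝ := fun N => ∫ ω, (R N ω - R (N - 1) ω) ^ 2 ∂μ
  have hsq : ∀ N i, i < N → IdentDistrib (fun ω => (R N ω - Rm N i ω) ^ 2)
      (fun ω => (R N ω - R (N - 1) ω) ^ 2) μ μ := by
    intro N i hi
    have hpair : IdentDistrib (fun ω => (R N ω, Rm N i ω)) (fun ω => (R N ω, R (N - 1) ω)) μ μ :=
      ⟨(hR N).aemeasurable.prodMk (hRm N i hi).aemeasurable,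
        (hR N).aemeasurable.prodMk (hR (N - 1)).aemeasurable, hjoint N i hi⟩
    exact hpair.comp (u := fun p : ℝ × ℝ => (p.1 - p.2) ^ 2) (by fun_prop)
  have hbound : ∀ N, Integrable (fun ω => jackknifeVariance (Rm N · ω) N) μ ∧
      ∫ ω, jackknifeVariance (Rm N · ω) N ∂μ ≤ ((N : ℝ) - 1) * (N * q N) := fun N =>
    integral_jackknifeVariance_le (hRm N)
      (fun i hi => (hsq N i hi).integrable_iff.2 ((hR N).sub (hR (N - 1))).integrable_sq)
      (fun i hi => (hsq N i hi).integral_eq)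
  refine ⟨fun N => (hbound N).1, tendsto_of_tendsto_of_tendsto_of_le_of_le tendsto_const_nhds hR2
    (fun N => integral_nonneg fun ω => jackknifeVariance_nonneg _ _) fun N => ?_⟩
  have hq : 0 ≤ q N := integral_nonneg fun ω => sq_nonneg _
  calc _ ≤ ((N : ℝ) - 1) * (N * q N) := (hbound N).2
    _ ≤ (N : ℝ) ^ 2 * q N := by nlinarith [(N.cast_nonneg : (0 : ℝ) ≤ N)]

section

variable {Y : ℕ → Ω → ℝ}

lemma integrable_sampleVariance (hY : ∀ i, MemLp (Y i) 2 μ) (N : ℕ) :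
    Integrable (fun ω => sampleVariance (Y · ω) N) μ := by
  simp only [sampleVariance_eq]
  exact ((integrable_finsetSum _ fun i _ => (hY i).integrable_sq).sub
    ((memLp_finsetSum _ fun i _ => hY i).integrable_sq.div_const _)).div_const _

variable [IsProbabilityMeasure μ]

lemma integral_sampleVariance (hindep : Pairwise fun i j => IndepFun (Y i) (Y j) μ)
    (hident : ∀ i, IdentDistrib (Y i) (Y 0) μ μ) (hY0 : MemLp (Y 0) 2 μ) {N : ℕ} (hN : 2 ≤ N) :
    ∫ ω, sampleVariance (Y · ω) N ∂μ = variance (Y 0) μ := by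
  have hY : ∀ i, MemLp (Y i) 2 μ := fun i => (hident i).memLp_iff.2 hY0
  have hS : MemLp (fun ω => ∑ i ∈ range N, Y i ω) 2 μ := memLp_finsetSum _ fun i _ => hY i
  have hmean : ∀ i, ∫ ω, Y i ω ∂μ = μ[Y 0] := fun i => (hident i).integral_eq
  have hsq : ∀ i, ∫ ω, Y i ω ^ 2 ∂μ = μ[Y 0 ^ 2] := fun i =>
    ((hident i).comp (measurable_id.pow_const 2)).integral_eq
  have hvarS : variance (fun ω => ∑ i ∈ range N, Y i ω) μ = N * variance (Y 0) μ := by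
    rw [← Finset.sum_fn, IndepFun.variance_sum (fun i _ => hY i) fun i _ j _ hij => hindep hij,
      sum_congr rfl fun i _ => (hident i).variance_eq, sum_const, card_range, nsmul_eq_mul]
  have hES : ∫ ω, ∑ i ∈ range N, Y i ω ∂μ = N * μ[Y 0] := by
    rw [integral_finsetSum _ fun i _ => (hY i).integrable one_le_two,
      sum_congr rfl fun i _ => hmean i, sum_const, card_range, nsmul_eq_mul]
  have hES2 : ∫ ω, (∑ i ∈ range N, Y i ω) ^ 2 ∂μ = N * variance (Y 0) μ + (N * μ[Y 0]) ^ 2 := by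
    rw [← hvarS, ← hES, variance_eq_sub hS]
    simp
  have hN1 : (N : ℝ) - 1 ≠ 0 := by
    have : (2 : ℝ) ≤ N := by exact_mod_cast hN
    linarith
  simp only [sampleVariance_eq]
  rw [integral_div, integral_sub (integrable_finsetSum _ fun i _ => (hY i).integrable_sq)
      (hS.integrable_sq.div_const _), integral_div, integral_finsetSum _ fun i _ =>
      (hY i).integrable_sq, sum_congr rfl fun i _ => hsq i, hES2, sum_const, card_range,
      nsmul_eq_mul, variance_eq_sub hY0]
  field_simp
  ring

lemma ae_tendsto_sampleVariance (hindep : Pairwise fun i j => IndepFun (Y i) (Y j) μ)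
    (hident : ∀ i, IdentDistrib (Y i) (Y 0) μ μ) (hY0 : MemLp (Y 0) 2 μ) :
    ∀ᵐ ω ∂μ, Tendsto (fun N => sampleVariance (Y · ω) N) atTop (𝓝 (variance (Y 0) μ)) := by
  have hmean := strong_law_ae Y (hY0.integrable one_le_two) hindep hident
  have hsq := strong_law_ae (fun i ω => Y i ω ^ 2) hY0.integrable_sq
    (fun i j hij => (hindep hij).comp (measurable_id.pow_const 2) (measurable_id.pow_const 2))
    fun i => (hident i).comp (measurable_id.pow_const 2)
  have hfrac : Tendsto (fun N : ℕ => (N : ℝ) / (N - 1)) atTop (𝓝 1) := by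
    simpa [← sub_eq_add_neg] using tendsto_natCast_div_add_atTop (-1 : ℝ)
  filter_upwards [hmean, hsq] with ω hω₁ hω₂
  have hlim := hfrac.mul (hω₂.sub (hω₁.pow 2))
  rw [one_mul] at hlim
  rw [variance_eq_sub hY0]
  refine hlim.congr' ((eventually_ne_atTop 0).mono fun N hN => ?_)
  simp only [sampleVariance_eq, smul_eq_mul]
  field_simp

end

theorem tendsto_jackknifeVariance [IsProbabilityMeasure μ] {Y R : ℕ → Ω → ℝ} {Tm Rm : ℕ → ℕ → Ω → ℝ}
    (hY : ∀ j, Measurable (Y j)) (hindep : Pairwise fun i j => IndepFun (Y i) (Y j) μ)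
    (hident : ∀ i, IdentDistrib (Y i) (Y 0) μ μ) (hY0 : MemLp (Y 0) 2 μ)
    (hTm : ∀ N i, Measurable (Tm N i)) (hR : ∀ N, MemLp (R N) 2 μ)
    (hdecomp : ∀ N i ω, i < N →
      Tm N i ω = (1 : ℝ) / (N - 1) * ∑ j ∈ (range N).erase i, Y j ω + Rm N i ω)
    (hjoint : ∀ N i, i < N →
      μ.map (fun ω => (R N ω, Rm N i ω)) = μ.map (fun ω => (R N ω, R (N - 1) ω)))
    (hR2 : Tendsto (fun N : ℕ => (N : ℝ) ^ 2 * ∫ ω, (R N ω - R (N - 1) ω) ^ 2 ∂μ)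
      atTop (𝓝 0)) :
    TendstoInMeasure μ (fun N ω => jackknifeVariance (Tm N · ω) N) atTop
        (fun _ => variance (Y 0) μ) ∧
      Tendsto (fun N => ∫ ω, jackknifeVariance (Tm N · ω) N ∂μ) atTop
        (𝓝 (variance (Y 0) μ)) := by
  have hRm : ∀ N i, i < N → Measurable (Rm N i) := fun N i hi => by
    have : Rm N i = fun ω => Tm N i ω - (1 : ℝ) / (N - 1) * ∑ j ∈ (range N).erase i, Y j ω := by
      funext ω
      rw [hdecomp N i ω hi]
      ring
    rw [this]
    exact (hTm N i).sub ((Finset.measurable_sum _ fun j _ => hY j).const_mul _)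
  obtain ⟨hBint, hEB⟩ := tendsto_integral_jackknifeVariance_remainder hR hRm hjoint hR2
  have hAint := integrable_sampleVariance (fun i => (hident i).memLp_iff.2 hY0)
  have hEA : ∀ᶠ N in atTop, ∫ ω, sampleVariance (Y · ω) N ∂μ = variance (Y 0) μ :=
    eventually_atTop.2 ⟨2, fun N hN => integral_sampleVariance hindep hident hY0 hN⟩
  have hle : ∀ N ω, ∀ s > 0, |jackknifeVariance (Tm N · ω) N - sampleVariance (Y · ω) N|
      ≤ s * sampleVariance (Y · ω) N + (1 + 1 / s) * jackknifeVariance (Rm N · ω) N := by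
    intro N ω s hs
    rw [jackknifeVariance_congr fun i hi => hdecomp N i ω hi,
      ← jackknifeVariance_leaveOneOutMean]
    exact abs_jackknifeVariance_add_sub_le
      (fun i => (1 : ℝ) / (N - 1) * ∑ j ∈ (range N).erase i, Y j ω) (Rm N · ω) N hs
  have hXA := integrable_sub_of_abs_sub_le
    (fun N => (measurable_jackknifeVariance fun i _ => hTm N i).aestronglyMeasurable) hAint
    hBint hle
  exact tendstoInMeasure_and_tendsto_integral_of_tendsto_integral_abs_sub hAint
    (ae_tendsto_sampleVariance hindep hident hY0) hEA hXA
    (tendsto_integral_abs_sub_of_abs_sub_le hAint hBint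
      (fun N ω => jackknifeVariance_nonneg _ _) hXA hle hEA hEB)

end

theorem stmt_13_general {Ω : Type*} [MeasureSpace Ω] [IsProbabilityMeasure (ℙ : Measure Ω)]
    (X1 X2 : ℕ → Ω → ℝ) (h : ℝ × ℝ → ℝ)
    (hmeas1 : ∀ j, Measurable (X1 j)) (hmeas2 : ∀ j, Measurable (X2 j))
    (hm : Measurable h)
    -- the pairs Zⱼ = (X_{1j}, X_{2j}) are i.i.d.
    (hindep : iIndepFun (fun j : ℕ => fun ω => (X1 j ω, X2 j ω)) ℙ)
    (hident : ∀ j, Measure.map (fun ω => (X1 j ω, X2 j ω)) ℙ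
      = Measure.map (fun ω => (X1 0 ω, X2 0 ω)) ℙ)
    (hmom : Integrable (fun ω => (h (X1 0 ω, X2 0 ω)) ^ 4) ℙ)
    (σ2T : ℝ) (hσ2T : σ2T = variance (fun ω => h (X1 0 ω, X2 0 ω)) ℙ)
    -- the statistic, its leave-one-pair-out versions and the remainder terms
    (T R : ℕ → Ω → ℝ) (Tm Rm : ℕ → ℕ → Ω → ℝ)
    (hmeasT : ∀ N, Measurable (T N)) (hmeasTm : ∀ N i, Measurable (Tm N i))
    (hdecomp : ∀ N ω, T N ω =
      ((1 : ℝ) / N) * ∑ j ∈ range N, h (X1 j ω, X2 j ω) + R N ω)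
    (hdecompm : ∀ N i ω, i < N → Tm N i ω =
      ((1 : ℝ) / (N - 1)) * ∑ j ∈ (range N).erase i, h (X1 j ω, X2 j ω) + Rm N i ω)
    (hjoint : ∀ N i, i < N →
      Measure.map (fun ω => (R N ω, Rm N i ω)) ℙ
        = Measure.map (fun ω => (R N ω, R (N - 1) ω)) ℙ)
    (hRint : ∀ N, Integrable (fun ω => (R N ω) ^ 2) ℙ)
    (hR2 : Tendsto (fun N : ℕ => (N : ℝ) ^ 2 * ∫ ω, (R N ω - R (N - 1) ω) ^ 2 ∂ℙ)
      atTop (nhds 0))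
    -- the leave-one-pair-out jackknife variance estimator
    (σhat : ℕ → Ω → ℝ)
    (hσhat : ∀ N ω, σhat N ω = ((N : ℝ) - 1) *
      ∑ i ∈ range N,
        (Tm N i ω - ((1 : ℝ) / N) * ∑ k ∈ range N, Tm N k ω) ^ 2) :
    (∀ ε > 0, Tendsto (fun N : ℕ =>
        ℙ {ω | ε < |σhat N ω - σ2T|}) atTop (nhds 0)) ∧
    Tendsto (fun N : ℕ => ∫ ω, σhat N ω ∂ℙ) atTop (nhds σ2T) := by
  set Y : ℕ → Ω → ℝ := fun j ω => h (X1 j ω, X2 j ω)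
  have hZ : ∀ j, Measurable fun ω => (X1 j ω, X2 j ω) := fun j => (hmeas1 j).prodMk (hmeas2 j)
  have hY : ∀ j, Measurable (Y j) := fun j => hm.comp (hZ j)
  have hY0 : MemLp (Y 0) 2 ℙ := by
    have hsq : MemLp (fun ω => Y 0 ω ^ 2) 2 ℙ :=
      (memLp_two_iff_integrable_sq ((hY 0).pow_const 2).aestronglyMeasurable).2
        (by simpa only [← pow_mul] using hmom)
    exact (memLp_two_iff_integrable_sq (hY 0).aestronglyMeasurable).2 (hsq.integrable one_le_two)
  have hR : ∀ N, MemLp (R N) 2 ℙ := fun N => by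
    have : R N = fun ω => T N ω - (1 : ℝ) / N * ∑ j ∈ range N, Y j ω := by
      funext ω
      rw [hdecomp N ω]
      ring
    have hmeasR : Measurable (R N) := by
      rw [this]
      exact (hmeasT N).sub ((Finset.measurable_sum _ fun j _ => hY j).const_mul _)
    exact (memLp_two_iff_integrable_sq hmeasR.aestronglyMeasurable).2 (hRint N)
  obtain ⟨hmeasure, hintegral⟩ := tendsto_jackknifeVariance (μ := ℙ) hY
    (fun i j hij => (hindep.comp (fun _ => h) fun _ => hm).indepFun hij)
    (fun j => (IdentDistrib.mk (hZ j).aemeasurable (hZ 0).aemeasurable (hident j)).comp hm)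
    hY0 hmeasTm hR hdecompm hjoint hR2
  obtain rfl : σhat = fun N ω => jackknifeVariance (Tm N · ω) N := funext₂ hσhat
  subst hσ2T
  refine ⟨fun ε hε => ?_, hintegral⟩
  refine tendsto_of_tendsto_of_tendsto_of_le_of_le tendsto_const_nhds
    (tendstoInMeasure_iff_dist.1 hmeasure ε hε) (fun _ => zero_le) fun N => measure_mono ?_
  intro ω hω
  simp only [Set.mem_ofPred_eq, Real.dist_eq] at hω ⊢
  exact hω.le

/-- for equal sample sizes, the leave-one-pair-out jackknife estimator
`σ̂_N²(T) = (N−1)∑ᵢ(T_{N,−i} − T̄_{N,−•})²` is consistent (in probability) and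
asymptotically unbiased for `σ²(T) = Var(h(Z₁))`, `h(z) = (h₁(z₁)+h₂(z₂))/2`. -/
theorem stmt_13 {Ω : Type*} [MeasureSpace Ω] [IsProbabilityMeasure (ℙ : Measure Ω)]
    (X1 X2 : ℕ → Ω → ℝ) (h₁ h₂ : ℝ → ℝ) (h : ℝ × ℝ → ℝ)
    (hmeas1 : ∀ j, Measurable (X1 j)) (hmeas2 : ∀ j, Measurable (X2 j))
    (hm : Measurable h)
    (hdef : ∀ z : ℝ × ℝ, h z = (h₁ z.1 + h₂ z.2) / 2)
    -- the pairs Zⱼ = (X_{1j}, X_{2j}) are i.i.d.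
    (hindep : iIndepFun (fun j : ℕ => fun ω => (X1 j ω, X2 j ω)) ℙ)
    (hident : ∀ j, Measure.map (fun ω => (X1 j ω, X2 j ω)) ℙ
      = Measure.map (fun ω => (X1 0 ω, X2 0 ω)) ℙ)
    (hcent : ∫ ω, h (X1 0 ω, X2 0 ω) ∂ℙ = 0)
    (hmom : Integrable (fun ω => (h (X1 0 ω, X2 0 ω)) ^ 4) ℙ)
    (σ2T : ℝ) (hσ2T : σ2T = variance (fun ω => h (X1 0 ω, X2 0 ω)) ℙ)
    -- the statistic, its leave-one-pair-out versions and the remainder terms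
    (T R : ℕ → Ω → ℝ) (Tm Rm : ℕ → ℕ → Ω → ℝ)
    (hmeasT : ∀ N, Measurable (T N)) (hmeasTm : ∀ N i, Measurable (Tm N i))
    (hdecomp : ∀ N ω, T N ω =
      ((1 : ℝ) / N) * ∑ j ∈ range N, h (X1 j ω, X2 j ω) + R N ω)
    (hdecompm : ∀ N i ω, i < N → Tm N i ω =
      ((1 : ℝ) / (N - 1)) * ∑ j ∈ (range N).erase i, h (X1 j ω, X2 j ω) + Rm N i ω)
    (hjoint : ∀ N i, i < N →
      Measure.map (fun ω => (R N ω, Rm N i ω)) ℙ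
        = Measure.map (fun ω => (R N ω, R (N - 1) ω)) ℙ)
    (hRint : ∀ N, Integrable (fun ω => (R N ω) ^ 2) ℙ)
    (hR1 : Tendsto (fun N : ℕ => (N : ℝ) * ∫ ω, (R N ω) ^ 2 ∂ℙ) atTop (nhds 0))
    (hR2 : Tendsto (fun N : ℕ => (N : ℝ) ^ 2 * ∫ ω, (R N ω - R (N - 1) ω) ^ 2 ∂ℙ)
      atTop (nhds 0))
    -- the leave-one-pair-out jackknife variance estimator
    (σhat : ℕ → Ω → ℝ)
    (hσhat : ∀ N ω, σhat N ω = ((N : ℝ) - 1) *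
      ∑ i ∈ range N,
        (Tm N i ω - ((1 : ℝ) / N) * ∑ k ∈ range N, Tm N k ω) ^ 2) :
    (∀ ε > 0, Tendsto (fun N : ℕ =>
        ℙ {ω | ε < |σhat N ω - σ2T|}) atTop (nhds 0)) ∧
    Tendsto (fun N : ℕ => ∫ ω, σhat N ω ∂ℙ) atTop (nhds σ2T) :=
  stmt_13_general X1 X2 h hmeas1 hmeas2 hm hindep hident hmom σ2T hσ2T T R Tm Rm hmeasT hmeasTm
    hdecomp hdecompm hjoint hRint hR2 σhat hσhat
end
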